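/- arXiv:1004.0395 — 3 statements merged into one kernel-verified Lean document; each statement's English description precedes it below -/
import Mathlib

section
/- Fix an integer B ≥ 1. For every n ≥ 1 and every 0 < v < B, the probability that exactly v blocks are collectively held by n independent peers satisfies p_n(v) = ∑_{k=0}^{v} p_{n−1}(k) · (B+1)/(B·(B−k+1)); in particular, for 0 < v < B the right-hand side does not depend on v. -/
/-!
Condition on the union `U` of the first `n - 1` peers, with `k = #U ≤ v`. The last peer's set `S`
must meet `Uᶜ` in exactly `j = v - k` points, and its weight depends only on
`#(S ∩ U) + #(S \ U)`; summing over both parts gives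
`C(B-k, j) / B * ∑ i, C(k, i) / C(B, i + j)`. The identity
`∑ i, C(k, i) / C(N + k, i + j) = (N + k + 1) / ((N + 1) C(N, j))`, proved by Pascal's rule in `k`
from `1 / C(N+1, j) + 1 / C(N+1, j+1) = (N + 2) / ((N + 1) C(N, j))`, turns this into
`(B + 1) / (B (B - k + 1))`, which does not involve `v`.
-/

/-- Single-peer block-ownership distribution in the `γ = ∞` model: a peer owning
`h ≤ B - 1` blocks has a uniformly random `h`-element subset, with `h` uniform on
`{0, …, B-1}`; the full set has probability `0`. -/
noncomputable def wmu (B : ℕ) (s : Finset (Fin B)) : ℝ :=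
  if s.card < B then 1 / (B * (B.choose s.card)) else 0

/-- `pmu B n v` : probability that exactly `v` blocks are collectively held by `n`
independent peers, each with block set drawn from `wmu B`. -/
noncomputable def pmu (B n v : ℕ) : ℝ :=
  ∑ f : Fin n → Finset (Fin B),
    if (Finset.univ.biUnion f).card = v then ∏ u, wmu B (f u) else 0

open Finset

lemma Finset.sum_eq_sum_powerset_sum_powerset_compl {α M : Type*} [Fintype α] [DecidableEq α]
    [AddCommMonoid M] (U : Finset α) (f : Finset α → M) :
    ∑ s, f s = ∑ a ∈ U.powerset, ∑ b ∈ Uᶜ.powerset, f (a ∪ b) := by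
  rw [← sum_product']
  refine sum_nbij' (fun s => (s ∩ U, s \ U)) (fun p => p.1 ∪ p.2) ?_ ?_ ?_ ?_ ?_
  · intro s _; simp [subset_iff]
  · simp
  · intro s _; exact sup_inf_sdiff s U
  · rintro ⟨a, b⟩ hab
    simp only [mem_product, mem_powerset, subset_compl_iff_disjoint_right] at hab
    ext x <;> simp <;> grind [disjoint_left]
  · intro s _; exact congrArg f (sup_inf_sdiff s U).symm

lemma Nat.inv_choose_add_inv_choose_succ (N j : ℕ) (hj : j ≤ N) :
    (((N + 1).choose j : ℝ))⁻¹ + (((N + 1).choose (j + 1) : ℝ))⁻¹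
      = ((N : ℝ) + 2) / (((N : ℝ) + 1) * N.choose j) := by
  have h₁ : ((N : ℝ) + 1) * N.choose j = (N + 1).choose (j + 1) * ((j : ℝ) + 1) := by
    exact_mod_cast Nat.add_one_mul_choose_eq N j
  have h₂ : (N.choose j : ℝ) * (N + 1) = (N + 1).choose j * ((N : ℝ) + 1 - j) := by
    have := congrArg (Nat.cast (R := ℝ)) (Nat.choose_mul_succ_eq N j)
    push_cast [Nat.cast_sub (show j ≤ N + 1 by omega)] at this
    exact this
  have : ((N + 1).choose j : ℝ) ≠ 0 := by exact_mod_cast Nat.choose_ne_zero (by omega)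
  have : ((N + 1).choose (j + 1) : ℝ) ≠ 0 := by exact_mod_cast Nat.choose_ne_zero (by omega)
  have : (N.choose j : ℝ) ≠ 0 := by exact_mod_cast Nat.choose_ne_zero hj
  field_simp
  linear_combination ((N + 1).choose j : ℝ) * h₁ + ((N + 1).choose (j + 1) : ℝ) * h₂

lemma Nat.sum_choose_mul_inv_choose_add (k N j : ℕ) (hj : j ≤ N) :
    ∑ i ∈ range (k + 1), (k.choose i : ℝ) * (((N + k).choose (i + j) : ℝ))⁻¹
      = ((N : ℝ) + k + 1) / (((N : ℝ) + 1) * N.choose j) := by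
  induction k generalizing N j with
  | zero =>
    have : (N.choose j : ℝ) ≠ 0 := by exact_mod_cast Nat.choose_ne_zero hj
    simp only [zero_add, range_one, add_zero, sum_singleton, Nat.choose_self, Nat.cast_one,
      one_mul, CharP.cast_eq_zero]
    field_simp
  | succ k ih =>
    have hsplit := sum_choose_succ_mul
      (fun i _ => (((N + (k + 1)).choose (i + j) : ℝ))⁻¹) k
    have h₁ := ih (N + 1) j (by omega)
    have h₂ := ih (N + 1) (j + 1) (by omega)
    simp only [← add_assoc] at h₂
    rw [hsplit, show N + (k + 1) = N + 1 + k by omega]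
    simp_rw [Nat.add_right_comm _ 1 j]
    rw [h₁, h₂]
    have : (N.choose j : ℝ) ≠ 0 := by exact_mod_cast Nat.choose_ne_zero hj
    calc _ = ((N : ℝ) + k + 2) / ((N : ℝ) + 2)
          * ((((N + 1).choose j : ℝ))⁻¹ + (((N + 1).choose (j + 1) : ℝ))⁻¹) := by
            simp only [div_eq_mul_inv, mul_inv]; push_cast; ring
      _ = _ := by
        rw [Nat.inv_choose_add_inv_choose_succ N j hj]
        push_cast
        field_simp
        ring

noncomputable def probCardUnion (B : ℕ) (U : Finset (Fin B)) (v : ℕ) : ℝ :=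
  ∑ s, if #(U ∪ s) = v then wmu B s else 0

lemma probCardUnion_of_card_le {B v : ℕ} {U : Finset (Fin B)} (hvB : v < B) (hU : #U ≤ v) :
    probCardUnion B U v = ((B : ℝ) + 1) / ((B : ℝ) * ((B : ℝ) - #U + 1)) := by
  set k := #U
  set j := v - k
  have hUc : #Uᶜ = B - k := by rw [card_compl, Fintype.card_fin]
  have hsummand : ∀ a ∈ U.powerset, ∀ b ∈ Uᶜ.powerset,
      (if #(U ∪ (a ∪ b)) = v then wmu B (a ∪ b) else 0)
        = if #b = j then ((B : ℝ) * B.choose (#a + j))⁻¹ else 0 := by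
    intro a ha b hb
    rw [mem_powerset] at ha hb
    have hUb : Disjoint U b := disjoint_of_subset_right hb disjoint_compl_right
    rw [← union_assoc, union_eq_left.mpr ha, card_union_of_disjoint hUb]
    by_cases hbj : #b = j
    · have hab : #(a ∪ b) = #a + j := by
        rw [card_union_of_disjoint (disjoint_of_subset_left ha hUb), hbj]
      have hak : #a ≤ k := card_le_card ha
      rw [if_pos (by omega), if_pos hbj, wmu, if_pos (by omega), hab, one_div]
    · rw [if_neg (by omega), if_neg hbj]
  have hinner : ∀ a ∈ U.powerset, ∑ b ∈ Uᶜ.powerset,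
      (if #b = j then ((B : ℝ) * B.choose (#a + j))⁻¹ else 0)
        = (B - k).choose j * ((B : ℝ) * B.choose (#a + j))⁻¹ := by
    intro a _
    rw [sum_powerset_apply_card
      (fun l => if l = j then ((B : ℝ) * B.choose (#a + j))⁻¹ else 0)]
    simp [hUc, show j < B - k + 1 by omega]
  have hsum := Nat.sum_choose_mul_inv_choose_add k (B - k) j (by omega)
  rw [Nat.sub_add_cancel (by omega), Nat.cast_sub (by omega)] at hsum
  have : ((B - k).choose j : ℝ) ≠ 0 := by exact_mod_cast Nat.choose_ne_zero (by omega)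
  calc probCardUnion B U v
      = ∑ a ∈ U.powerset, (B - k).choose j * ((B : ℝ) * B.choose (#a + j))⁻¹ := by
        rw [probCardUnion, sum_eq_sum_powerset_sum_powerset_compl U]
        exact sum_congr rfl fun a ha =>
          (sum_congr rfl (hsummand a ha)).trans (hinner a ha)
    _ = (B - k).choose j / B
          * ∑ i ∈ range (k + 1), (k.choose i : ℝ) * (B.choose (i + j) : ℝ)⁻¹ := by
        rw [sum_powerset_apply_card
          (fun i => ((B - k).choose j : ℝ) * ((B : ℝ) * B.choose (i + j))⁻¹), mul_sum]
        refine sum_congr rfl fun i _ => ?_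
        rw [nsmul_eq_mul, mul_inv]
        ring
    _ = _ := by
        rw [hsum]
        field_simp
        ring

lemma probCardUnion_of_lt_card {B v : ℕ} {U : Finset (Fin B)} (hU : v < #U) :
    probCardUnion B U v = 0 :=
  sum_eq_zero fun _ _ => if_neg (hU.trans_le (card_le_card subset_union_left)).ne'

lemma Fin.biUnion_univ_cons {α : Type*} [DecidableEq α] {n : ℕ} (s : Finset α)
    (g : Fin n → Finset α) :
    univ.biUnion (Fin.cons s g : Fin (n + 1) → Finset α) = s ∪ univ.biUnion g := by
  ext; simp [Fin.exists_fin_succ]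

lemma pmu_succ (B n v : ℕ) :
    pmu B (n + 1) v = ∑ g : Fin n → Finset (Fin B),
      (∏ i, wmu B (g i)) * probCardUnion B (univ.biUnion g) v := by
  rw [pmu, ← (Fin.consEquiv fun _ => Finset (Fin B)).sum_comp, Fintype.sum_prod_type,
    sum_comm]
  refine sum_congr rfl fun g _ => ?_
  rw [probCardUnion, mul_sum]
  refine sum_congr rfl fun s _ => ?_
  simp only [Fin.consEquiv, Equiv.coe_fn_mk, Fin.biUnion_univ_cons, Fin.prod_univ_succ,
    Fin.cons_zero, Fin.cons_succ, union_comm s, mul_ite, mul_zero, mul_comm (wmu B s)]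

lemma sum_prod_wmu_mul_card_biUnion (B n : ℕ) (F : ℕ → ℝ) :
    ∑ g : Fin n → Finset (Fin B), (∏ i, wmu B (g i)) * F #(univ.biUnion g)
      = ∑ k ∈ range (B + 1), pmu B n k * F k := by
  simp only [pmu, sum_mul, ite_mul, zero_mul]
  rw [sum_comm]
  refine sum_congr rfl fun g _ => ?_
  have hcard : #(univ.biUnion g) < B + 1 := by
    have := card_le_univ (univ.biUnion g)
    rw [Fintype.card_fin] at this
    omega
  rw [sum_ite_eq, if_pos (mem_range.mpr hcard)]

theorem stmt2_general (B n v : ℕ) (hn : 1 ≤ n) (hvB : v < B) :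
    pmu B n v = ∑ k ∈ Finset.range (v + 1),
      pmu B (n - 1) k * ((B : ℝ) + 1) / ((B : ℝ) * ((B : ℝ) - k + 1)) := by
  obtain ⟨m, rfl⟩ : ∃ m, n = m + 1 := ⟨n - 1, by omega⟩
  set F : ℕ → ℝ := fun k =>
    if k ≤ v then ((B : ℝ) + 1) / ((B : ℝ) * ((B : ℝ) - k + 1)) else 0
  have hstep : ∀ U : Finset (Fin B), probCardUnion B U v = F #U := by
    intro U
    by_cases hU : #U ≤ v
    · simp only [F, if_pos hU, probCardUnion_of_card_le hvB hU]
    · simp only [F, if_neg hU, probCardUnion_of_lt_card (not_le.mp hU)]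
  have hrange : (range (B + 1)).filter (· ≤ v) = range (v + 1) := by
    ext k; simp only [mem_filter, mem_range]; omega
  calc pmu B (m + 1) v
      = ∑ g : Fin m → Finset (Fin B), (∏ i, wmu B (g i)) * F #(univ.biUnion g) := by
        simp only [pmu_succ, hstep]
    _ = ∑ k ∈ range (B + 1), pmu B m k * F k := sum_prod_wmu_mul_card_biUnion B m F
    _ = _ := by
        simp only [F, mul_ite, mul_zero, ← sum_filter, hrange, mul_div_assoc, Nat.add_sub_cancel]

/-- for `B ≥ 1`, `n ≥ 1` and `0 < v < B`,
`p_n(v) = ∑_{k=0}^{v} p_{n-1}(k) (B+1)/(B(B-k+1))`; the coefficient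
`(B+1)/(B(B-k+1))` of `p_{n-1}(k)` does not depend on `v`. -/
theorem stmt2 (B n v : ℕ) (hB : 1 ≤ B) (hn : 1 ≤ n) (hv0 : 0 < v) (hvB : v < B) :
    pmu B n v = ∑ k ∈ Finset.range (v + 1),
      pmu B (n - 1) k * ((B : ℝ) + 1) / ((B : ℝ) * ((B : ℝ) - k + 1)) :=
  stmt2_general B n v hn hvB
end

section
/- Fix an integer B ≥ 1. For every n ≥ 1: p_n(0;μ) = (B+1)^{−n}, and for every 1 ≤ v ≤ B, p_n(v;μ) = p_n(v−1;μ) + p_{n−1}(v;μ)/(B−v+1), with base case p_0(0;μ) = 1 and p_0(v;μ) = 0 for v ≠ 0. -/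
/-- Single-peer block-ownership distribution in the `γ = μ` model: each subset `s`
of `{1, …, B}` has probability `1/((B+1) C(B,|s|))` (a uniform size in `{0, …, B}`,
then a uniform subset of that size). -/
noncomputable def wnu (B : ℕ) (s : Finset (Fin B)) : ℝ :=
  1 / ((B + 1) * (B.choose s.card))

/-- `pnu B n v` : probability that exactly `v` blocks are collectively held by `n`
independent peers, each with block set drawn from `wnu B`. -/
noncomputable def pnu (B n v : ℕ) : ℝ :=
  ∑ f : Fin n → Finset (Fin B),
    if (Finset.univ.biUnion f).card = v then ∏ u, wnu B (f u) else 0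

/-! For a fixed `v`-set `T` the peers are independent, so
`P(S₁ ∪ ⋯ ∪ Sₙ ⊆ T) = P(S₁ ⊆ T)ⁿ = (B + 1 - v)⁻ⁿ`. Summing over `T`, and counting the `v`-sets
that contain the union, gives the unitriangular system
`∑_{w ≤ v} C(B - w, v - w) p_n(w) = C(B, v) (B + 1 - v)⁻ⁿ`. Consequently the transform of
`(B + 1 - w) p_{n+1}(w) - p_n(w)` is `∑_{w ≤ v} C(B - w, v - w) (v - w) p_{n+1}(w)`, which by
`(v - w) C(B - w, v - w) = (B - w) C(B - w - 1, v - w - 1)` is the transform of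
`(B + 1 - w) p_{n+1}(w - 1)`. Unitriangularity identifies the two sequences: that is the recurrence. -/

open Finset

lemma eq_of_forall_sum_range_succ_mul_eq {c : ℕ → ℕ → ℝ} (hc : ∀ v, c v v ≠ 0)
    {x y : ℕ → ℝ} {N : ℕ}
    (h : ∀ v ≤ N, ∑ w ∈ range (v + 1), c v w * x w = ∑ w ∈ range (v + 1), c v w * y w) :
    ∀ v ≤ N, x v = y v := by
  intro v
  induction v using Nat.strong_induction_on with
  | _ v ih =>
    intro hv
    have hsum := h v hv
    rw [sum_range_succ, sum_range_succ,
      sum_congr rfl fun w hw => by rw [ih w (mem_range.1 hw) ((mem_range.1 hw).le.trans hv)]]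
      at hsum
    exact mul_left_cancel₀ (hc v) (add_left_cancel hsum)

lemma sum_range_choose_sub_sub {B v : ℕ} (hv : v ≤ B) :
    ∑ k ∈ range (v + 1), (B - k).choose (v - k) = (B + 1).choose v := by
  calc ∑ k ∈ range (v + 1), (B - k).choose (v - k)
      = ∑ j ∈ range (v + 1), (j + (B - v)).choose (B - v) := by
        rw [← sum_range_reflect (fun j => (j + (B - v)).choose (B - v))]
        refine sum_congr rfl fun k hk => ?_
        have hk := mem_range.1 hk
        rw [Nat.choose_symm_of_eq_add (by omega : B - k = (v - k) + (B - v))]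
        congr 1
        omega
    _ = (B + 1).choose v := by
        rw [Nat.sum_range_add_choose, show v + (B - v) + 1 = B + 1 by omega,
          Nat.choose_symm_of_eq_add (by omega : B + 1 = (B - v + 1) + v)]

lemma sum_range_choose_div_choose {B t : ℕ} (ht : t ≤ B) :
    ∑ k ∈ range (t + 1), (t.choose k : ℝ) / B.choose k = (B + 1) / (B + 1 - t) := by
  have hBt : (B.choose t : ℝ) ≠ 0 := by exact_mod_cast (Nat.choose_pos ht).ne'
  have hterm : ∀ k ∈ range (t + 1),
      (t.choose k : ℝ) / B.choose k = ((B - k).choose (t - k) : ℝ) / B.choose t := by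
    intro k hk
    have hk := Nat.lt_succ_iff.1 (mem_range.1 hk)
    have hBk : (B.choose k : ℝ) ≠ 0 := by exact_mod_cast (Nat.choose_pos (hk.trans ht)).ne'
    have hmul : (B.choose t : ℝ) * t.choose k = B.choose k * (B - k).choose (t - k) := by
      exact_mod_cast Nat.choose_mul (n := B) hk
    rw [div_eq_div_iff hBk hBt]
    linear_combination hmul
  have hsum : ∑ k ∈ range (t + 1), ((B - k).choose (t - k) : ℝ) = (B + 1).choose t := by
    exact_mod_cast sum_range_choose_sub_sub ht
  have hsucc : (B.choose t : ℝ) * (B + 1) = (B + 1).choose t * (B + 1 - t) := by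
    have h := congrArg (Nat.cast (R := ℝ)) (Nat.choose_mul_succ_eq B t)
    push_cast [Nat.cast_sub (by omega : t ≤ B + 1)] at h
    exact h
  have hpos : (B : ℝ) + 1 - t ≠ 0 := by
    have : (t : ℝ) ≤ B := by exact_mod_cast ht
    linarith
  rw [sum_congr rfl hterm, ← sum_div, hsum, div_eq_div_iff hBt hpos]
  linear_combination -hsucc

lemma sum_powerset_wnu (B : ℕ) (T : Finset (Fin B)) :
    ∑ s ∈ T.powerset, wnu B s = 1 / ((B : ℝ) + 1 - #T) := by
  have hT : #T ≤ B := by simpa using card_le_univ T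
  have hB : (B : ℝ) + 1 ≠ 0 := by positivity
  calc ∑ s ∈ T.powerset, wnu B s
      = ∑ k ∈ range (#T + 1), (#T).choose k • (1 / (((B : ℝ) + 1) * B.choose k)) :=
        sum_powerset_apply_card (fun k => 1 / (((B : ℝ) + 1) * B.choose k))
    _ = 1 / ((B : ℝ) + 1) * ∑ k ∈ range (#T + 1), ((#T).choose k : ℝ) / B.choose k := by
        rw [mul_sum]
        refine sum_congr rfl fun k _ => ?_
        simp only [nsmul_eq_mul, one_div, mul_inv]
        ring
    _ = 1 / ((B : ℝ) + 1 - #T) := by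
        rw [sum_range_choose_div_choose hT]
        field_simp

lemma sum_ite_biUnion_subset_prod_wnu (B n : ℕ) (T : Finset (Fin B)) :
    ∑ f : Fin n → Finset (Fin B), (if univ.biUnion f ⊆ T then ∏ u, wnu B (f u) else 0)
      = (1 / ((B : ℝ) + 1 - #T)) ^ n := by
  rw [← sum_powerset_wnu, sum_pow', ← sum_filter]
  congr 1
  ext f
  simp [Fintype.mem_piFinset]

lemma card_filter_powersetCard_univ_subset {α : Type*} [Fintype α] [DecidableEq α]
    (s : Finset α) (v : ℕ) :
    #{t ∈ powersetCard v univ | s ⊆ t}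
      = if #s ≤ v then (Fintype.card α - #s).choose (v - #s) else 0 := by
  split_ifs with hs
  · simpa using card_filter_powersetCard_subset s univ v (subset_univ s) hs
  · rw [card_eq_zero, filter_eq_empty_iff]
    intro t ht hst
    exact hs ((card_le_card hst).trans (mem_powersetCard.1 ht).2.le)

-- `(B - w).choose (v - w)` counts the `v`-subsets of `Fin B` containing a given `w`-subset.
def supersetTransform (B : ℕ) (x : ℕ → ℝ) (v : ℕ) : ℝ :=
  ∑ w ∈ range (v + 1), ((B - w).choose (v - w) : ℝ) * x w

lemma supersetTransform_pnu (B n v : ℕ) :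
    supersetTransform B (pnu B n) v = B.choose v / ((B : ℝ) + 1 - v) ^ n := by
  calc supersetTransform B (pnu B n) v
      = ∑ f : Fin n → Finset (Fin B),
          (#{T ∈ powersetCard v univ | univ.biUnion f ⊆ T} : ℝ) * ∏ u, wnu B (f u) := by
        simp only [supersetTransform, pnu, mul_sum]
        rw [sum_comm]
        refine sum_congr rfl fun f _ => ?_
        simp only [card_filter_powersetCard_univ_subset, Fintype.card_fin, mul_ite, mul_zero]
        rw [sum_ite_eq]
        split_ifs <;> simp_all
    _ = ∑ T ∈ powersetCard v univ, ∑ f : Fin n → Finset (Fin B),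
          if univ.biUnion f ⊆ T then ∏ u, wnu B (f u) else 0 := by
        rw [sum_comm]
        refine sum_congr rfl fun f _ => ?_
        rw [← sum_filter, sum_const, nsmul_eq_mul]
    _ = B.choose v / ((B : ℝ) + 1 - v) ^ n := by
        rw [sum_congr rfl fun T hT => by
          rw [sum_ite_biUnion_subset_prod_wnu, (mem_powersetCard.1 hT).2]]
        rw [sum_const, card_powersetCard, card_univ, Fintype.card_fin, nsmul_eq_mul, div_pow,
          one_pow, mul_one_div]

lemma pnu_zero_right (B n : ℕ) : pnu B n 0 = 1 / ((B : ℝ) + 1) ^ n := by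
  simpa [supersetTransform] using supersetTransform_pnu B n 0

lemma pnu_zero_left (B v : ℕ) : pnu B 0 v = if v = 0 then 1 else 0 := by
  rw [pnu, Fintype.sum_unique]
  simp [eq_comm]

lemma supersetTransform_pnu_eq_mul_succ {B v : ℕ} (n : ℕ) (hv : v ≤ B) :
    supersetTransform B (pnu B n) v
      = ((B : ℝ) + 1 - v) * supersetTransform B (pnu B (n + 1)) v := by
  have hpos : (B : ℝ) + 1 - v ≠ 0 := by
    have : (v : ℝ) ≤ B := by exact_mod_cast hv
    linarith
  rw [supersetTransform_pnu, supersetTransform_pnu, pow_succ]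
  field_simp

lemma supersetTransform_sub_pnu {B v : ℕ} (n : ℕ) (hv : v ≤ B) :
    supersetTransform B (fun w => ((B : ℝ) + 1 - w) * pnu B (n + 1) w - pnu B n w) v
      = ∑ w ∈ range (v + 1), ((B - w).choose (v - w) : ℝ) * ((v : ℝ) - w) * pnu B (n + 1) w := by
  have h := supersetTransform_pnu_eq_mul_succ n hv
  simp only [supersetTransform] at h ⊢
  calc ∑ w ∈ range (v + 1), ((B - w).choose (v - w) : ℝ) * (((B : ℝ) + 1 - w) * pnu B (n + 1) w
          - pnu B n w)
      = ∑ w ∈ range (v + 1), ((B - w).choose (v - w) : ℝ) * ((B : ℝ) + 1 - w) * pnu B (n + 1) w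
          - ∑ w ∈ range (v + 1), ((B - w).choose (v - w) : ℝ) * pnu B n w := by
        rw [← sum_sub_distrib]
        exact sum_congr rfl fun w _ => by ring
    _ = _ := by
        rw [h, mul_sum, ← sum_sub_distrib]
        exact sum_congr rfl fun w _ => by ring

lemma sum_range_choose_mul_sub {B m : ℕ} (x : ℕ → ℝ) (hm : m + 1 ≤ B) :
    ∑ w ∈ range (m + 2), ((B - w).choose (m + 1 - w) : ℝ) * (((m + 1 : ℕ) : ℝ) - w) * x w
      = ∑ w ∈ range (m + 1),
          ((B - (w + 1)).choose (m + 1 - (w + 1)) : ℝ) * (((B : ℝ) - w) * x w) := by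
  rw [sum_range_succ, sub_self, mul_zero, zero_mul, add_zero]
  refine sum_congr rfl fun w hw => ?_
  have hw := Nat.lt_succ_iff.1 (mem_range.1 hw)
  have hchoose := Nat.add_one_mul_choose_eq (B - (w + 1)) (m - w)
  rw [show B - (w + 1) + 1 = B - w by omega, show m - w + 1 = m + 1 - w by omega] at hchoose
  have hcast := congrArg (Nat.cast (R := ℝ)) hchoose
  push_cast [Nat.cast_sub (by omega : w ≤ B), Nat.cast_sub (by omega : w ≤ m + 1)] at hcast
  rw [show m + 1 - (w + 1) = m - w by omega]
  push_cast
  linear_combination (-x w) * hcast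

lemma pnu_succ_succ {B m : ℕ} (k : ℕ) (hm : m + 1 ≤ B) :
    pnu B (k + 1) (m + 1) = pnu B (k + 1) m + pnu B k (m + 1) / ((B : ℝ) - m) := by
  set z : ℕ → ℝ := fun w => ((B : ℝ) + 1 - w) * pnu B (k + 1) w - pnu B k w with hz
  have hB : (B : ℝ) + 1 ≠ 0 := by positivity
  have hz0 : z 0 = 0 := by
    simp only [hz, pnu_zero_right, pow_succ, Nat.cast_zero, sub_zero]
    field_simp
    ring
  have hshift : ∀ j ≤ B - 1,
      ∑ u ∈ range (j + 1), ((B - (u + 1)).choose (j + 1 - (u + 1)) : ℝ) * z (u + 1)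
        = ∑ u ∈ range (j + 1),
            ((B - (u + 1)).choose (j + 1 - (u + 1)) : ℝ) * (((B : ℝ) - u) * pnu B (k + 1) u) := by
    intro j hj
    calc ∑ u ∈ range (j + 1), ((B - (u + 1)).choose (j + 1 - (u + 1)) : ℝ) * z (u + 1)
        = supersetTransform B z (j + 1) := by
          rw [supersetTransform, sum_range_succ' _ (j + 1), hz0, mul_zero, add_zero]
      _ = _ := supersetTransform_sub_pnu k (by omega)
      _ = _ := sum_range_choose_mul_sub _ (by omega)
  have hzm := eq_of_forall_sum_range_succ_mul_eq (by simp) hshift m (by omega)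
  have hpos : (B : ℝ) - m ≠ 0 := by
    have : (m : ℝ) + 1 ≤ B := by exact_mod_cast hm
    linarith
  simp only [hz] at hzm
  push_cast at hzm
  field_simp
  linear_combination hzm

theorem stmt6_general (B : ℕ) (n : ℕ) (hn : 1 ≤ n) :
    pnu B n 0 = 1 / ((B : ℝ) + 1) ^ n ∧
    (∀ v : ℕ, 1 ≤ v → v ≤ B →
      pnu B n v = pnu B n (v - 1) + pnu B (n - 1) v / ((B : ℝ) - v + 1)) ∧
    pnu B 0 0 = 1 ∧ (∀ w : ℕ, w ≠ 0 → pnu B 0 w = 0) := by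
  refine ⟨pnu_zero_right B n, fun v hv hvB => ?_, by simp [pnu_zero_left],
    fun w hw => by simp [pnu_zero_left, hw]⟩
  obtain ⟨m, rfl⟩ : ∃ m, v = m + 1 := ⟨v - 1, by omega⟩
  obtain ⟨k, rfl⟩ : ∃ k, n = k + 1 := ⟨n - 1, by omega⟩
  rw [pnu_succ_succ k hvB, Nat.add_sub_cancel, Nat.add_sub_cancel, Nat.cast_add_one,
    sub_add_eq_sub_sub, sub_add_cancel]

/-- for `B ≥ 1` and `n ≥ 1`: `p_n(0;μ) = (B+1)⁻ⁿ`, and for `1 ≤ v ≤ B`,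
`p_n(v;μ) = p_n(v-1;μ) + p_{n-1}(v;μ)/(B-v+1)`, with base case `p_0(0;μ) = 1` and
`p_0(v;μ) = 0` for `v ≠ 0`. -/
theorem stmt6 (B : ℕ) (hB : 1 ≤ B) (n : ℕ) (hn : 1 ≤ n) :
    pnu B n 0 = 1 / ((B : ℝ) + 1) ^ n ∧
    (∀ v : ℕ, 1 ≤ v → v ≤ B →
      pnu B n v = pnu B n (v - 1) + pnu B (n - 1) v / ((B : ℝ) - v + 1)) ∧
    pnu B 0 0 = 1 ∧ (∀ w : ℕ, w ≠ 0 → pnu B 0 w = 0) :=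
  stmt6_general B n hn
end

section
/- Fix an integer B ≥ 1, a block b ∈ {1,…,B}, and a real ρ ≥ 0. If S_1,…,S_n are independent draws from μ_B, then P(b ∉ S_1 ∪ ⋯ ∪ S_n) = ((B+1)/(2B))^n for every n ≥ 0, and consequently the Poisson mixture ∑_{n=0}^{∞} e^{−Bρ} (Bρ)^n / n! · ((B+1)/(2B))^n equals exp(−ρ(B−1)/2). That is, the steady-state probability q_∞ that a tagged block is unavailable among the leechers equals exp(−ρ(B−1)/2). -/
open Finset

lemma Nat.sum_range_sub_mul_two (n : ℕ) : (∑ k ∈ range n, (n - k)) * 2 = n * (n + 1) := by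
  have h := sum_range_reflect (fun j => j) (n + 1)
  rw [sum_range_succ, add_tsub_cancel_right, Nat.sub_self, add_zero] at h
  rw [h, sum_range_id_mul_two, add_tsub_cancel_right, mul_comm]

lemma Nat.choose_pred_mul_eq {n : ℕ} (hn : 0 < n) (k : ℕ) :
    (n - 1).choose k * n = n.choose k * (n - k) := by
  obtain ⟨m, rfl⟩ := Nat.exists_eq_succ_of_ne_zero hn.ne'
  simpa using Nat.choose_mul_succ_eq m k

lemma Finset.filter_notMem_univ_eq_powerset_erase {α : Type*} [Fintype α] [DecidableEq α] (b : α) :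
    ({s : Finset α | b ∉ s} : Finset (Finset α)) = (univ.erase b).powerset := by
  ext s
  simp [subset_erase]

lemma sum_ite_notMem_biUnion_prod {α R : Type*} [Fintype α] [DecidableEq α] [CommSemiring R]
    (b : α) (g : Finset α → R) (n : ℕ) :
    (∑ f : Fin n → Finset α, if b ∉ univ.biUnion f then ∏ u, g (f u) else 0)
      = (∑ s, if b ∉ s then g s else 0) ^ n := by
  rw [Fintype.sum_pow]
  refine sum_congr rfl fun f _ => ?_
  simp only [prod_ite_zero, mem_univ, true_implies, mem_biUnion, true_and, not_exists]

lemma sum_wmu_notMem {B : ℕ} (b : Fin B) :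
    (∑ s : Finset (Fin B), if b ∉ s then wmu B s else 0) = ((B : ℝ) + 1) / (2 * B) := by
  have hB : (0 : ℝ) < B := by exact_mod_cast b.pos
  let g : ℕ → ℝ := fun k => if k < B then 1 / (B * B.choose k) else 0
  have hcard : (univ.erase b).card = B - 1 := by simp
  have hterm : ∀ k ∈ range B, (B - 1).choose k • g k = ((B - k : ℕ) : ℝ) / B ^ 2 := by
    intro k hk
    rw [mem_range] at hk
    have hchoose : ((B - 1).choose k : ℝ) * B = B.choose k * (B - k : ℕ) := by
      exact_mod_cast Nat.choose_pred_mul_eq b.pos k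
    have : (B.choose k : ℝ) ≠ 0 := by exact_mod_cast (Nat.choose_pos hk.le).ne'
    simp only [g, if_pos hk, nsmul_eq_mul]
    field_simp
    linear_combination hchoose
  have hgauss : ((∑ k ∈ range B, (B - k) : ℕ) : ℝ) * 2 = B * (B + 1) := by
    exact_mod_cast Nat.sum_range_sub_mul_two B
  calc (∑ s : Finset (Fin B), if b ∉ s then wmu B s else 0)
      = ∑ s ∈ (univ.erase b).powerset, g s.card := by
        rw [← sum_filter, filter_notMem_univ_eq_powerset_erase]; rfl
    _ = ∑ k ∈ range B, (B - 1).choose k • g k := by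
        rw [sum_powerset_apply_card, hcard, Nat.sub_add_cancel b.pos]
    _ = ((∑ k ∈ range B, (B - k) : ℕ) : ℝ) / B ^ 2 := by
        rw [sum_congr rfl hterm, ← sum_div, Nat.cast_sum]
    _ = ((B : ℝ) + 1) / (2 * B) := by
        rw [div_eq_div_iff (by positivity) (by positivity)]
        linear_combination (B : ℝ) * hgauss

lemma tsum_poisson_mul_pow (a q : ℝ) :
    ∑' n : ℕ, Real.exp (-a) * a ^ n / n.factorial * q ^ n = Real.exp (-(a * (1 - q))) := by
  calc ∑' n : ℕ, Real.exp (-a) * a ^ n / n.factorial * q ^ n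
      = Real.exp (-a) * ∑' n : ℕ, (a * q) ^ n / n.factorial := by
        rw [← tsum_mul_left]
        exact tsum_congr fun n => by ring
    _ = Real.exp (-(a * (1 - q))) := by
        rw [← congrFun NormedSpace.exp_eq_tsum_div, ← Real.exp_eq_exp_ℝ, ← Real.exp_add]
        ring_nf

theorem stmt13_general (B : ℕ) (b : Fin B) (ρ : ℝ) :
    (∀ n : ℕ,
      (∑ f : Fin n → Finset (Fin B),
        if b ∉ Finset.univ.biUnion f then ∏ u, wmu B (f u) else 0)
        = (((B : ℝ) + 1) / (2 * (B : ℝ))) ^ n) ∧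
    (∑' n : ℕ, Real.exp (-((B : ℝ) * ρ)) * ((B : ℝ) * ρ) ^ n / n.factorial *
        (((B : ℝ) + 1) / (2 * (B : ℝ))) ^ n)
      = Real.exp (-(ρ * ((B : ℝ) - 1) / 2)) := by
  refine ⟨fun n => by rw [sum_ite_notMem_biUnion_prod, sum_wmu_notMem], ?_⟩
  have hB : (B : ℝ) ≠ 0 := by exact_mod_cast b.pos.ne'
  rw [tsum_poisson_mul_pow]
  congr 1
  field_simp
  ring

/-- for `B ≥ 1`, a tagged block `b`, and `ρ ≥ 0`: for every `n ≥ 0`,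
the probability that `b` is owned by none of `n` independent leechers is
`((B+1)/(2B))^n`, and consequently the Poisson mixture (with mean `Bρ`)
`∑_{n} e^{-Bρ} (Bρ)^n/n! ((B+1)/(2B))^n` equals `exp(-ρ(B-1)/2)`; that is,
`q_∞ = exp(-ρ(B-1)/2)`. -/
theorem stmt13 (B : ℕ) (hB : 1 ≤ B) (b : Fin B) (ρ : ℝ) (hρ : 0 ≤ ρ) :
    (∀ n : ℕ,
      (∑ f : Fin n → Finset (Fin B),
        if b ∉ Finset.univ.biUnion f then ∏ u, wmu B (f u) else 0)
        = (((B : ℝ) + 1) / (2 * (B : ℝ))) ^ n) ∧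
    (∑' n : ℕ, Real.exp (-((B : ℝ) * ρ)) * ((B : ℝ) * ρ) ^ n / n.factorial *
        (((B : ℝ) + 1) / (2 * (B : ℝ))) ^ n)
      = Real.exp (-(ρ * ((B : ℝ) - 1) / 2)) :=
  stmt13_general B b ρ
end
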